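/- arXiv:2106.04467 — 2 statements merged into one kernel-verified Lean document; each statement's English description precedes it below -/
import Mathlib

section
/- For every row index j ∈ {1,…,k} and every v ∈ V, the entry in row j of the decoded query column of a Q&A user satisfies Pr(Q(j, A) = v) = θ_j·((1−λ)·p_j(v) + (λ/(2m−1))·(1 − p_j(v))) + (1 − θ_j)/(2m). -/
/-!
Condition on the group `g`. If `g = j`, the decoded entry `Q(j, A)` is the randomized
value itself, whose law is `p_j` pushed through `RR_λ`. If `g ≠ j`, post-composing row `j`
of `Q` with a transposition of `V` is a bijection of `𝒬` that fixes row `g`, so `Q(j, A)` is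
uniform on `V` whatever `V̊` is, which gives the term `1 / (2m)`.
-/

open scoped BigOperators

noncomputable section

/-- The value alphabet `V = {±1, …, ±m} ⊆ ℤ`. -/
def Vset (m : ℕ) : Finset ℤ := (Finset.Icc (-(m : ℤ)) m).erase 0

/-- Values as a (finite) type. -/
abbrev Vt (m : ℕ) : Type := {v : ℤ // v ∈ Vset m}

/-- Query matrices: `k × 2m` matrices whose rows are permutations of `V`,
encoded row-wise as equivalences between column indices and values. -/
abbrev Query (k m : ℕ) : Type := Fin k → (Fin (2*m) ≃ Vt m)

/-- The randomized response channel `RR_λ` on `V`: probability that input `v`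
is turned into output `w`. -/
def RR (m : ℕ) (lam : ℝ) (v w : Vt m) : ℝ :=
  if w = v then 1 - lam else lam / (2*m - 1)

open Finset

section Channel

variable {m : ℕ}

lemma card_Vt (m : ℕ) : Fintype.card (Vt m) = 2 * m := by
  rw [Fintype.card_coe, Vset, card_erase_of_mem (by simp), Int.card_Icc]
  omega

lemma Vt.pos (v : Vt m) : 0 < m := by
  obtain ⟨v, hv⟩ := v
  simp only [Vset, mem_erase, mem_Icc] at hv
  omega

lemma Vt.two_mul_sub_one_pos (v : Vt m) : (0 : ℝ) < 2 * m - 1 := by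
  have : (1 : ℝ) ≤ m := by exact_mod_cast v.pos
  linarith

lemma sum_RR_eq_one (lam : ℝ) (v : Vt m) : ∑ w, RR m lam v w = 1 := by
  rw [← sum_erase_add _ _ (mem_univ v), RR, if_pos rfl,
    sum_congr rfl fun w hw => by rw [RR, if_neg (ne_of_mem_erase hw)], sum_const,
    card_erase_of_mem (mem_univ v), card_univ, card_Vt, nsmul_eq_mul,
    Nat.cast_sub (by have := v.pos; omega)]
  push_cast
  field_simp [v.two_mul_sub_one_pos.ne']
  ring

lemma sum_mul_RR {p : Vt m → ℝ} (hp : ∑ v, p v = 1) (lam : ℝ) (v : Vt m) :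
    ∑ u, p u * RR m lam u v = (1 - lam) * p v + lam / (2 * m - 1) * (1 - p v) := by
  rw [← sum_erase_add _ _ (mem_univ v), RR, if_pos rfl,
    sum_congr rfl fun u hu => by rw [RR, if_neg (ne_of_mem_erase hu).symm], ← sum_mul,
    sum_erase_eq_sub (mem_univ v), hp]
  ring

end Channel

lemma sum_mul_ite_eq_of_sum_eq_one {ι : Type*} [Fintype ι] [DecidableEq ι] {θ : ι → ℝ}
    (hθ : ∑ i, θ i = 1) (j : ι) (x y : ℝ) :
    ∑ i, θ i * (if i = j then x else y) = θ j * x + (1 - θ j) * y := by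
  have : ∀ i, θ i * (if i = j then x else y)
      = θ i * y + if i = j then θ i * (x - y) else 0 := by
    intro i
    split_ifs <;> ring
  simp only [this, sum_add_distrib, ← sum_mul, hθ, sum_ite_eq', mem_univ, if_true]
  ring

section RowPermutations

variable {ι α β : Type*} [Fintype ι] [DecidableEq ι] [Fintype α] [DecidableEq α]
  [Fintype β] [DecidableEq β]

lemma card_filter_decode_eq_of_ne {g j : ι} (hg : g ≠ j) (w b b' : β) :
    #{q : ι → α ≃ β | q j ((q g).symm w) = b}
      = #{q : ι → α ≃ β | q j ((q g).symm w) = b'} := by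
  let σ : (ι → α ≃ β) → (ι → α ≃ β) :=
    fun q => Function.update q j ((q j).trans (Equiv.swap b b'))
  have hσj : ∀ q, σ q j = (q j).trans (Equiv.swap b b') := fun q => Function.update_self ..
  have hσg : ∀ q, σ q g = q g := fun q => Function.update_of_ne hg ..
  have hσσ : ∀ q, σ (σ q) = q := by
    intro q
    funext i
    rcases eq_or_ne i j with rfl | hi
    · ext x; simp [hσj, Equiv.swap_apply_self]
    · simp [σ, Function.update_of_ne hi]
  refine card_nbij' σ σ ?_ ?_ (fun q _ => hσσ q) (fun q _ => hσσ q) <;>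
  · intro q hq
    simp only [coe_filter, Set.mem_ofPred_eq, mem_univ, true_and] at hq ⊢
    simp [hσj, hσg, hq]

lemma card_mul_card_filter_decode {g j : ι} (hg : g ≠ j) (w b : β) :
    Fintype.card β * #{q : ι → α ≃ β | q j ((q g).symm w) = b}
      = Fintype.card (ι → α ≃ β) := by
  calc Fintype.card β * #{q : ι → α ≃ β | q j ((q g).symm w) = b}
      = ∑ b' : β, #{q : ι → α ≃ β | q j ((q g).symm w) = b'} := by
        simp only [card_filter_decode_eq_of_ne hg w _ b, sum_const, card_univ, smul_eq_mul]
    _ = Fintype.card (ι → α ≃ β) :=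
        (card_eq_sum_card_fiberwise fun q _ => mem_univ (q j ((q g).symm w))).symm

end RowPermutations

instance (k m : ℕ) : Nonempty (Query k m) :=
  ⟨fun _ => Fintype.equivOfCardEq (by rw [Fintype.card_fin, card_Vt])⟩

lemma sum_decode_div_card {k m : ℕ} (j g : Fin k) (w v : Vt m) :
    (∑ q : Query k m, if q j ((q g).symm w) = v then (1 : ℝ) else 0) / Fintype.card (Query k m)
      = if g = j then (if w = v then 1 else 0) else 1 / (2 * (m : ℝ)) := by
  have hC : (Fintype.card (Query k m) : ℝ) ≠ 0 := Nat.cast_ne_zero.2 Fintype.card_ne_zero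
  split_ifs with hg hw
  · subst hg hw
    simp only [Equiv.apply_symm_apply, if_true, sum_const, card_univ, nsmul_eq_mul, mul_one]
    exact div_self hC
  · subst hg
    simp only [Equiv.apply_symm_apply, hw, if_false, sum_const_zero, zero_div]
  · have hcard : (Fintype.card (Query k m) : ℝ)
        = 2 * m * #{q : Query k m | q j ((q g).symm w) = v} := by
      rw [← card_mul_card_filter_decode hg w v, card_Vt]
      push_cast
      rfl
    rw [sum_boole, hcard]
    rw [hcard] at hC
    field_simp [right_ne_zero_of_mul hC]

theorem stmt4_general (m k : ℕ)
    (p : Fin k → Vt m → ℝ)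
    (hpsum : ∀ g, ∑ v : Vt m, p g v = 1)
    (θ : Fin k → ℝ) (hθ1 : ∑ g, θ g = 1)
    (lam : ℝ)
    (j : Fin k) (v : Vt m) :
    (∑ g : Fin k, ∑ v0 : Vt m, ∑ q : Query k m, ∑ w : Vt m,
        θ g * p g v0 * (1 / (Fintype.card (Query k m) : ℝ)) * RR m lam v0 w *
          (if q j ((q g).symm w) = v then (1:ℝ) else 0))
      = θ j * ((1 - lam) * p j v + (lam/(2*m - 1)) * (1 - p j v))
          + (1 - θ j) / (2*m) := by
  calc _ = ∑ g, θ g * ∑ u, p g u * ∑ w, RR m lam u w *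
          ((∑ q : Query k m, if q j ((q g).symm w) = v then (1 : ℝ) else 0) /
            Fintype.card (Query k m)) := by
        refine sum_congr rfl fun g _ => ?_
        simp only [mul_sum, sum_div]
        refine sum_congr rfl fun u _ => ?_
        rw [sum_comm]
        refine sum_congr rfl fun w _ => sum_congr rfl fun q _ => by ring
    _ = ∑ g, θ g * if g = j then (1 - lam) * p j v + lam / (2 * m - 1) * (1 - p j v)
          else 1 / (2 * (m : ℝ)) := by
        refine sum_congr rfl fun g _ => ?_
        simp only [sum_decode_div_card]
        split_ifs with hg
        · subst hg
          simp only [mul_ite, mul_one, mul_zero, sum_ite_eq', mem_univ, if_true,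
            sum_mul_RR (hpsum g)]
        · simp only [← sum_mul, sum_RR_eq_one, hpsum g, one_mul]
    _ = _ := by
        rw [sum_mul_ite_eq_of_sum_eq_one hθ1]
        ring

/-- For every row `j` and every `v ∈ V`, the decoded
query-column entry of a Q&A user satisfies
`Pr(Q(j,A) = v) = θ_j·((1−λ)p_j(v) + (λ/(2m−1))(1 − p_j(v))) + (1−θ_j)/(2m)`.
The probability is computed from the joint model: `G ~ θ`, `V ~ p_G`,
`Q` uniform on `𝒬`, `V̊ = RR_λ(V)`, and `A` the column of row `G` of `Q`
containing `V̊`. -/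
theorem stmt4 (m k : ℕ) (hm : 0 < m) (hk : 2 ≤ k)
    (p : Fin k → Vt m → ℝ)
    (hpsum : ∀ g, ∑ v : Vt m, p g v = 1)
    (hp : ∀ g v, 0 < p g v ∧ p g v < 1)
    (θ : Fin k → ℝ) (hθ0 : ∀ g, 0 ≤ θ g) (hθ1 : ∑ g, θ g = 1)
    (lam : ℝ) (hlam0 : 0 ≤ lam) (hlam1 : lam < 1 - 1/(2*m))
    (j : Fin k) (v : Vt m) :
    (∑ g : Fin k, ∑ v0 : Vt m, ∑ q : Query k m, ∑ w : Vt m,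
        θ g * p g v0 * (1 / (Fintype.card (Query k m) : ℝ)) * RR m lam v0 w *
          (if q j ((q g).symm w) = v then (1:ℝ) else 0))
      = θ j * ((1 - lam) * p j v + (lam/(2*m - 1)) * (1 - p j v))
          + (1 - θ j) / (2*m) :=
  stmt4_general m k p hpsum θ hθ1 lam j v
end
end

section
/- The RG estimator is unbiased: for every group g ∈ {1,…,k}, E[Ŝ_RG(g)] = E[S(g)], where S(g) = Σ_{i : G_i = g} V_i is the true aggregate and Ŝ_RG(g) = ((2m−1)/((1−λ_gr)(2m(1−λ_vl)−1)))·Σ_{i : G̊_i = g} V̊_i. (Theorem 2, part 3, unbiasedness.) -/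
open scoped BigOperators

noncomputable section

/-- The RG randomization channel: probability that a user with true group `g`
and true value `v` outputs the pair `(h, w)`. With probability `1 − λ_gr` he
keeps his group (`h = g`) and reports `w = RR_{λ_vl}(v)`; with probability
`λ_gr/(k−1)` he reports each other group, together with a uniform value. -/
def RGch (k m : ℕ) (lgr lvl : ℝ) (g : Fin k) (v : Vt m)
    (h : Fin k) (w : Vt m) : ℝ :=
  if h = g then (1 - lgr) * RR m lvl v w else (lgr / ((k : ℝ) - 1)) * (1 / (2*m))
/-- One RG user's outcome: his group, value, reported group and reported value. -/
abbrev OmegaRG (k m : ℕ) : Type := Fin k × Vt m × Fin k × Vt m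

/-- Probability weight of a single RG user's outcome `(g, v, g̊, v̊)`:
`θ(g)·p_g(v)·RGch(g̊, v̊ | g, v)` (`G ~ θ`; given `G = g`, `V ~ p_g`; the
pair `(G̊, V̊)` is produced by the RG randomization channel). -/
def wRG (k m : ℕ) (θ : Fin k → ℝ) (p : Fin k → Vt m → ℝ) (lgr lvl : ℝ)
    (ω : OmegaRG k m) : ℝ :=
  θ ω.1 * p ω.1 ω.2.1 * RGch k m lgr lvl ω.1 ω.2.1 ω.2.2.1 ω.2.2.2

/-- True aggregate of group `g`: `S(g) = Σ_{i : G_i = g} V_i`. -/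
def trueAggRG (k m n : ℕ) (ω : Fin n → OmegaRG k m) (g : Fin k) : ℝ :=
  ∑ i, if (ω i).1 = g then (((ω i).2.1 : ℤ) : ℝ) else 0

/-- The RG estimator
`Ŝ_RG(g) = ((2m−1)/((1−λ_gr)(2m(1−λ_vl)−1)))·Σ_{i : G̊_i = g} V̊_i`. -/
def estRG (k m n : ℕ) (lgr lvl : ℝ) (ω : Fin n → OmegaRG k m) (g : Fin k) : ℝ :=
  ((2*m - 1) / ((1 - lgr) * (2*m*(1 - lvl) - 1))) *
    ∑ i, if (ω i).2.2.1 = g then (((ω i).2.2.2 : ℤ) : ℝ) else 0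

lemma Vset_card (m : ℕ) : (Vset m).card = 2*m := by
  rw [Vset, Finset.card_erase_of_mem (by simp), Int.card_Icc]
  omega

lemma Vt_card (m : ℕ) : Fintype.card (Vt m) = 2*m := by
  rw [Fintype.card_coe, Vset_card]

lemma Vt_sum_zero (m : ℕ) : ∑ v : Vt m, ((v : ℤ) : ℝ) = 0 := by
  have h : ∑ v : Vt m, ((v : ℤ) : ℝ) = ∑ v ∈ Vset m, (v : ℝ) := by
    rw [← Finset.sum_coe_sort (Vset m) (fun v => (v : ℝ))]
  rw [h]
  refine Finset.sum_involution (fun a _ => -a) (fun a ha => by push_cast; ring)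
    (fun a ha hfa hc => ?_) (fun a ha => ?_) (fun a ha => by ring)
  · have ha0 : a ≠ 0 := by simp [Vset] at ha; exact fun h0 => by simp [h0] at ha
    have h0 : -a = a := hc
    have : a = 0 := by omega
    exact ha0 this
  · simp only [Vset, Finset.mem_erase, Finset.mem_Icc] at ha ⊢; omega

lemma expect_sum {Ω : Type*} [Fintype Ω] [DecidableEq Ω] (w f : Ω → ℝ)
    (hw : ∑ x, w x = 1) (n : ℕ) :
    ∑ ω : Fin n → Ω, (∏ i, w (ω i)) * (∑ i, f (ω i))
      = (n : ℝ) * ∑ x, w x * f x := by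
  have key : ∀ i : Fin n, (∑ ω : Fin n → Ω, (∏ j, w (ω j)) * f (ω i)) = ∑ x, w x * f x := by
    intro i
    have h1 : ∀ ω : Fin n → Ω, (∏ j, w (ω j)) * f (ω i)
        = ∏ j, (if j = i then w (ω j) * f (ω j) else w (ω j)) := by
      intro ω
      have h2 : ∀ j : Fin n, (if j = i then w (ω j) * f (ω j) else w (ω j))
          = w (ω j) * (if j = i then f (ω j) else 1) := by
        intro j; split <;> simp
      simp_rw [h2, Finset.prod_mul_distrib,
        Finset.prod_ite_eq' Finset.univ i (fun j => f (ω j))]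
      simp [mul_comm]
    simp_rw [h1]
    have h3 := Finset.prod_univ_sum (fun _ : Fin n => (Finset.univ : Finset Ω))
      (fun j x => if j = i then w x * f x else w x)
    rw [Fintype.piFinset_univ] at h3
    rw [← h3]
    have h4 : ∀ j : Fin n, (∑ x : Ω, if j = i then w x * f x else w x)
        = (if j = i then (∑ x, w x * f x) else 1) := by
      intro j; split <;> simp [hw]
    simp_rw [h4, Finset.prod_ite_eq' Finset.univ i (fun _ => ∑ x, w x * f x)]
    simp
  calc ∑ ω : Fin n → Ω, (∏ i, w (ω i)) * (∑ i, f (ω i))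
      = ∑ ω : Fin n → Ω, ∑ i, (∏ j, w (ω j)) * f (ω i) := by
        simp_rw [Finset.mul_sum]
    _ = ∑ i : Fin n, ∑ ω : Fin n → Ω, (∏ j, w (ω j)) * f (ω i) := Finset.sum_comm
    _ = ∑ i : Fin n, ∑ x, w x * f x := by simp_rw [key]
    _ = (n : ℝ) * ∑ x, w x * f x := by simp [Finset.sum_const, mul_comm]

lemma RR_sum (m : ℕ) (hm : 0 < m) (lvl : ℝ) (v : Vt m) :
    ∑ w : Vt m, RR m lvl v w = 1 := by
  have hm1 : (2*(m:ℝ) - 1) ≠ 0 := by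
    have : (1:ℝ) ≤ m := by exact_mod_cast hm
    nlinarith
  have h : ∀ w : Vt m, RR m lvl v w
      = (if w = v then (1 - lvl - lvl/(2*m-1)) else 0) + lvl/(2*m-1) := by
    intro w; rw [RR]; split <;> ring
  simp_rw [h, Finset.sum_add_distrib, Finset.sum_ite_eq' Finset.univ v,
    Finset.sum_const, Finset.card_univ, Vt_card]
  simp only [Finset.mem_univ, if_true, nsmul_eq_mul]
  push_cast
  field_simp
  ring

lemma RR_mean (m : ℕ) (hm : 0 < m) (lvl : ℝ) (v : Vt m) :
    ∑ w : Vt m, RR m lvl v w * ((w : ℤ) : ℝ)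
      = (1 - lvl - lvl/(2*m-1)) * ((v : ℤ) : ℝ) := by
  have h : ∀ w : Vt m, RR m lvl v w * ((w : ℤ) : ℝ)
      = (if w = v then (1 - lvl - lvl/(2*m-1)) * ((w : ℤ) : ℝ) else 0)
        + lvl/(2*m-1) * ((w : ℤ) : ℝ) := by
    intro w; rw [RR]; split <;> ring
  simp_rw [h, Finset.sum_add_distrib,
    Finset.sum_ite_eq' Finset.univ v (fun w => (1 - lvl - lvl/(2*m-1)) * ((w : ℤ) : ℝ)),
    ← Finset.mul_sum, Vt_sum_zero]
  simp

lemma ch_sum (k m : ℕ) (hk : 2 ≤ k) (hm : 0 < m) (lgr lvl : ℝ) (g' : Fin k) (v : Vt m) :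
    ∑ h : Fin k, ∑ w : Vt m, RGch k m lgr lvl g' v h w = 1 := by
  have hk1 : ((k:ℝ) - 1) ≠ 0 := by
    have : (2:ℝ) ≤ k := by exact_mod_cast hk
    nlinarith
  have hm0 : (2*(m:ℝ)) ≠ 0 := by positivity
  have hinner : ∀ h : Fin k, (∑ w : Vt m, RGch k m lgr lvl g' v h w)
      = if h = g' then (1 - lgr) else lgr / ((k:ℝ) - 1) := by
    intro h
    by_cases hh : h = g'
    · simp only [RGch, hh, if_true]
      rw [← Finset.mul_sum, RR_sum m hm lvl v, mul_one]
    · simp only [RGch, hh, if_false, Finset.sum_const, Finset.card_univ, Vt_card,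
        nsmul_eq_mul]
      push_cast
      field_simp
  simp_rw [hinner]
  have h2 : ∀ h : Fin k, (if h = g' then (1 - lgr) else lgr / ((k:ℝ) - 1))
      = (if h = g' then (1 - lgr - lgr / ((k:ℝ) - 1)) else 0) + lgr / ((k:ℝ) - 1) := by
    intro h; split <;> ring
  simp_rw [h2, Finset.sum_add_distrib, Finset.sum_ite_eq' Finset.univ g',
    Finset.sum_const, Finset.card_univ, Fintype.card_fin, nsmul_eq_mul]
  simp only [Finset.mem_univ, if_true]
  field_simp
  ring

lemma wRG_sum (k m : ℕ) (hk : 2 ≤ k) (hm : 0 < m)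
    (θ : Fin k → ℝ) (p : Fin k → Vt m → ℝ)
    (hpsum : ∀ g, ∑ v : Vt m, p g v = 1) (hθ1 : ∑ g, θ g = 1) (lgr lvl : ℝ) :
    ∑ x : OmegaRG k m, wRG k m θ p lgr lvl x = 1 := by
  simp_rw [wRG, Fintype.sum_prod_type, ← Finset.mul_sum]
  have h : ∀ (g' : Fin k) (v : Vt m),
      (∑ h : Fin k, ∑ w : Vt m, RGch k m lgr lvl g' v h w) = 1 :=
    fun g' v => ch_sum k m hk hm lgr lvl g' v
  simp_rw [h, mul_one, ← Finset.mul_sum, hpsum, mul_one, hθ1]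

lemma E_true (k m : ℕ) (hk : 2 ≤ k) (hm : 0 < m)
    (θ : Fin k → ℝ) (p : Fin k → Vt m → ℝ) (lgr lvl : ℝ) (g : Fin k) :
    ∑ x : OmegaRG k m, wRG k m θ p lgr lvl x * (if x.1 = g then ((x.2.1 : ℤ) : ℝ) else 0)
      = θ g * ∑ v : Vt m, p g v * ((v : ℤ) : ℝ) := by
  simp_rw [wRG, Fintype.sum_prod_type]
  have h1 : ∀ (g' : Fin k) (v : Vt m) (h : Fin k) (w : Vt m),
      θ g' * p g' v * RGch k m lgr lvl g' v h w * (if g' = g then ((v : ℤ) : ℝ) else 0)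
        = (if g' = g then θ g' * p g' v * ((v : ℤ) : ℝ) else 0) * RGch k m lgr lvl g' v h w := by
    intro g' v h w; split <;> ring
  simp_rw [h1, ← Finset.mul_sum, ch_sum k m hk hm lgr lvl, mul_one]
  rw [Finset.sum_comm]
  simp_rw [Finset.sum_ite_eq' Finset.univ g (fun g' => θ g' * p g' _ * _)]
  simp [Finset.mul_sum, mul_assoc]

lemma E_rep (k m : ℕ) (hk : 2 ≤ k) (hm : 0 < m)
    (θ : Fin k → ℝ) (p : Fin k → Vt m → ℝ) (lgr lvl : ℝ) (g : Fin k) :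
    ∑ x : OmegaRG k m, wRG k m θ p lgr lvl x * (if x.2.2.1 = g then ((x.2.2.2 : ℤ) : ℝ) else 0)
      = (1 - lgr) * (1 - lvl - lvl/(2*m-1)) * (θ g * ∑ v : Vt m, p g v * ((v : ℤ) : ℝ)) := by
  simp_rw [wRG, Fintype.sum_prod_type]
  have h1 : ∀ (g' : Fin k) (v : Vt m) (h : Fin k) (w : Vt m),
      θ g' * p g' v * RGch k m lgr lvl g' v h w * (if h = g then ((w : ℤ) : ℝ) else 0)
        = if h = g then θ g' * p g' v * (RGch k m lgr lvl g' v h w * ((w : ℤ) : ℝ)) else 0 := by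
    intro g' v h w; split <;> ring
  simp_rw [h1]
  have h2 : ∀ (g' : Fin k) (v : Vt m),
      (∑ h : Fin k, ∑ w : Vt m,
        if h = g then θ g' * p g' v * (RGch k m lgr lvl g' v h w * ((w : ℤ) : ℝ)) else 0)
      = θ g' * p g' v * ∑ w : Vt m, RGch k m lgr lvl g' v g w * ((w : ℤ) : ℝ) := by
    intro g' v
    rw [Finset.sum_comm]
    simp_rw [Finset.sum_ite_eq' Finset.univ g]
    simp [Finset.mul_sum]
  simp_rw [h2]
  have h3 : ∀ (g' : Fin k) (v : Vt m),
      (∑ w : Vt m, RGch k m lgr lvl g' v g w * ((w : ℤ) : ℝ))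
        = if g = g' then (1 - lgr) * ((1 - lvl - lvl/(2*m-1)) * ((v : ℤ) : ℝ)) else 0 := by
    intro g' v
    by_cases hg : g = g'
    · simp only [RGch, hg, if_true]
      simp_rw [mul_assoc, ← Finset.mul_sum, RR_mean m hm lvl v]
    · simp only [RGch, hg, if_false]
      rw [← Finset.mul_sum, Vt_sum_zero, mul_zero]
  simp_rw [h3]
  have h4 : ∀ (g' : Fin k) (v : Vt m),
      θ g' * p g' v * (if g = g' then (1 - lgr) * ((1 - lvl - lvl/(2*m-1)) * ((v : ℤ) : ℝ)) else 0)
        = if g = g' then (1 - lgr) * (1 - lvl - lvl/(2*m-1)) * (θ g' * (p g' v * ((v : ℤ) : ℝ))) else 0 := by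
    intro g' v; split <;> ring
  simp_rw [h4]
  rw [Finset.sum_comm]
  simp_rw [Finset.sum_ite_eq Finset.univ g]
  simp [Finset.mul_sum, mul_assoc]

/-- The RG estimator is unbiased: for every group `g`,
`E[Ŝ_RG(g)] = E[S(g)]`, where the expectation is over `n` i.i.d. RG users. -/
theorem stmt13 (m k n : ℕ) (hm : 0 < m) (hk : 2 ≤ k) (hn : 0 < n)
    (p : Fin k → Vt m → ℝ)
    (hpsum : ∀ g, ∑ v : Vt m, p g v = 1)
    (hp : ∀ g v, 0 < p g v ∧ p g v < 1)
    (θ : Fin k → ℝ) (hθ0 : ∀ g, 0 ≤ θ g) (hθ1 : ∑ g, θ g = 1)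
    (lgr lvl : ℝ) (hlgr : lgr ∈ Set.Ioo (0:ℝ) 1)
    (hlvl : lvl ∈ Set.Ico (0:ℝ) (1 - 1/(2*m)))
    (g : Fin k) :
    (∑ ω : Fin n → OmegaRG k m,
        (∏ i, wRG k m θ p lgr lvl (ω i)) * estRG k m n lgr lvl ω g)
      = ∑ ω : Fin n → OmegaRG k m,
          (∏ i, wRG k m θ p lgr lvl (ω i)) * trueAggRG k m n ω g := by
  have hw := wRG_sum k m hk hm θ p hpsum hθ1 lgr lvl
  have hrep := expect_sum (wRG k m θ p lgr lvl)
    (fun x : OmegaRG k m => if x.2.2.1 = g then ((x.2.2.2 : ℤ) : ℝ) else 0) hw n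
  have htrue := expect_sum (wRG k m θ p lgr lvl)
    (fun x : OmegaRG k m => if x.1 = g then ((x.2.1 : ℤ) : ℝ) else 0) hw n
  have step1 : (∑ ω : Fin n → OmegaRG k m,
        (∏ i, wRG k m θ p lgr lvl (ω i)) * estRG k m n lgr lvl ω g)
      = ((2*(m:ℝ) - 1) / ((1 - lgr) * (2*(m:ℝ)*(1 - lvl) - 1))) *
        ((n:ℝ) * ∑ x : OmegaRG k m, wRG k m θ p lgr lvl x *
          (if x.2.2.1 = g then ((x.2.2.2 : ℤ) : ℝ) else 0)) := by
    simp_rw [estRG, mul_left_comm]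
    rw [← Finset.mul_sum, hrep]
    ring
  have step2 : (∑ ω : Fin n → OmegaRG k m,
        (∏ i, wRG k m θ p lgr lvl (ω i)) * trueAggRG k m n ω g)
      = (n:ℝ) * ∑ x : OmegaRG k m, wRG k m θ p lgr lvl x *
          (if x.1 = g then ((x.2.1 : ℤ) : ℝ) else 0) := by
    simp_rw [trueAggRG]
    rw [htrue]
  rw [step1, step2, E_rep k m hk hm θ p lgr lvl g, E_true k m hk hm θ p lgr lvl g]
  have hm' : (1:ℝ) ≤ m := by exact_mod_cast hm
  have hm1 : (2*(m:ℝ) - 1) ≠ 0 := by nlinarith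
  have hlg : (1 - lgr) ≠ 0 := by have := hlgr.2; intro h; nlinarith
  have hD : (2*(m:ℝ)*(1 - lvl) - 1) ≠ 0 := by
    have h2 := hlvl.2
    have hmpos : (0:ℝ) < 2*(m:ℝ) := by nlinarith
    have : 1/(2*(m:ℝ)) < 1 - lvl := by nlinarith
    have : 1 < 2*(m:ℝ)*(1 - lvl) := by
      rw [div_lt_iff₀ hmpos] at this
      nlinarith
    nlinarith
  field_simp
  ring
end
end
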